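/- Let f be a feed-forward DNN with L layers, weight matrices W_k, biases b_k, and activations φ_k applied componentwise, with layer outputs h_0(x) = x and h_k(x) = φ_k(W_k h_{k-1}(x) + b_k). Let P ⊆ ℝ^{n_0}, let k ∈ {1,…,L−1}, let B ⊆ {1,…,n_k} be a bucket with complement B̄, and let I = ∏_{i∈B}[l_i,u_i] be a box such that for every x ∈ P, the subvector h_k(x)_{(B)} lies in I. Let f̂' be the abstract network with weights Ŵ_j = W_j, biases b̂_j = b_j and interval biases Ê_j = {0} for all layers j except Ŵ'_k = W_{k(B̄,·)}, b̂'_k = b_{k(B̄)}, Ê'_k = {0}, Ŵ'_{k+1} = W_{k+1(·,B̄)}, b̂'_{k+1} = b_{k+1}, Ê'_{k+1} = W_{k+1(·,B)}·I, whose output set on x is Ĥ_L(x) with Ĥ_0(x) = {x} and Ĥ_j(x) = φ_j(Ŵ'_j Ĥ_{j-1}(x) + b̂'_j ⊕ Ê'_j). Then f(x) ∈ f̂'(x) for every x ∈ P. Consequently, if f̂'(x) ∩ Q = ∅ for all x ∈ P, then f(x) ∉ Q for all x ∈ P. -/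
import Mathlib


/-- Layer outputs of a feed-forward DNN: `h_0 = x`, `h_{k+1} = φ_{k+1}(W_{k+1} h_k + b_{k+1})`.
The data of (paper-)layer `k+1` is indexed by `k`. -/
def dnnLayer (N : ℕ → Type) [∀ k, Fintype (N k)]
    (W : ∀ k, Matrix (N (k + 1)) (N k) ℝ) (b : ∀ k, N (k + 1) → ℝ)
    (φ : ℕ → ℝ → ℝ) (x : N 0 → ℝ) : (k : ℕ) → N k → ℝ
  | 0 => x
  | k + 1 => fun i => φ k (((W k).mulVec (dnnLayer N W b φ x k) + b k) i)

/-- Layer output sets of an abstract network: `Ĥ_0 = {x}` and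
`Ĥ_{k+1} = φ_{k+1}(Ŵ_{k+1} Ĥ_k + b̂_{k+1} ⊕ Ê_{k+1})`, where `⊕` is the Minkowski sum.
The data of (paper-)layer `k+1` is indexed by `k`. -/
def absLayer (N : ℕ → Type) [∀ k, Fintype (N k)]
    (W : ∀ k, Matrix (N (k + 1)) (N k) ℝ) (b : ∀ k, N (k + 1) → ℝ)
    (E : ∀ k, Set (N (k + 1) → ℝ)) (φ : ℕ → ℝ → ℝ) (x : N 0 → ℝ) :
    (k : ℕ) → Set (N k → ℝ)
  | 0 => {x}
  | k + 1 => {v | ∃ h ∈ absLayer N W b E φ x k, ∃ e ∈ E k,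
      v = fun i => φ k (((W k).mulVec h + b k + e) i)}

/-- Neuron index types of the merged network: at layer `k` the neurons of the bucket `B`
are removed (the remaining neurons are those of the complement `B̄`); all other layers
are unchanged. -/
def mergedN (N : ℕ → Type) (k : ℕ) (B : Set (N k)) (j : ℕ) : Type :=
  if j = k then {i : N k // i ∉ B} else N j

theorem mergedN_eq_of_eq (N : ℕ → Type) (k : ℕ) (B : Set (N k)) {j : ℕ} (h : j = k) :
    mergedN N k B j = {i : N k // i ∉ B} := if_pos h

theorem mergedN_eq_of_ne (N : ℕ → Type) (k : ℕ) (B : Set (N k)) {j : ℕ} (h : j ≠ k) :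
    mergedN N k B j = N j := if_neg h

/-- The canonical map from merged neuron indices back to original neuron indices:
the subtype inclusion `B̄ ↪ N k` at layer `k`, and the identity elsewhere. -/
def mergedEmb (N : ℕ → Type) (k : ℕ) (B : Set (N k)) (j : ℕ) (i : mergedN N k B j) :
    N j :=
  if h : j = k then
    cast (congrArg N h).symm ((cast (mergedN_eq_of_eq N k B h) i).val)
  else cast (mergedN_eq_of_ne N k B h) i

instance mergedN.instFintype (N : ℕ → Type) [∀ j, Fintype (N j)] (k : ℕ)
    (B : Set (N k)) [DecidablePred (· ∈ B)] (j : ℕ) : Fintype (mergedN N k B j) := by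
  unfold mergedN
  split
  · exact Subtype.fintype _
  · infer_instance

/-- Weights of the merged network: `Ŵ'_k = W_{k(B̄,·)}`, `Ŵ'_{k+1} = W_{k+1(·,B̄)}`, and
all other weight matrices unchanged. -/
def mergedW (N : ℕ → Type) (k : ℕ) (B : Set (N k))
    (W : ∀ j, Matrix (N (j + 1)) (N j) ℝ) (j : ℕ) :
    Matrix (mergedN N k B (j + 1)) (mergedN N k B j) ℝ :=
  fun i₂ i₁ => W j (mergedEmb N k B (j + 1) i₂) (mergedEmb N k B j i₁)

/-- Biases of the merged network: `b̂'_k = b_{k(B̄)}` and all other biases unchanged. -/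
def mergedb (N : ℕ → Type) (k : ℕ) (B : Set (N k))
    (b : ∀ j, N (j + 1) → ℝ) (j : ℕ) : mergedN N k B (j + 1) → ℝ :=
  fun i => b j (mergedEmb N k B (j + 1) i)

/-- Interval bias sets of the merged abstraction of a DNN:
`Ê'_{k+1} = W_{k+1(·,B)}·I` (where `I = [l, u]` is the box over the bucket `B`) and
`Ê'_j = {0}` for every other layer. -/
def mergedE0 (N : ℕ → Type) [∀ j, Fintype (N j)] (k : ℕ) (B : Set (N k))
    [DecidablePred (· ∈ B)] (W : ∀ j, Matrix (N (j + 1)) (N j) ℝ)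
    (l u : {i : N k // i ∈ B} → ℝ) (j : ℕ) :
    Set (mergedN N k B (j + 1) → ℝ) :=
  if h : j = k then
    {v | ∃ t ∈ Set.Icc l u, v = fun i₂ => ∑ i : {i : N k // i ∈ B},
        W j (mergedEmb N k B (j + 1) i₂) (cast (congrArg N h).symm i.val) * t i}
  else {0}

set_option linter.unusedSectionVars false

section Aux
variable (N : ℕ → Type) [∀ j, Fintype (N j)] (k : ℕ) (B : Set (N k))
  [DecidablePred (· ∈ B)]

theorem mergedEmb_ne {j : ℕ} (h : j ≠ k) (i : mergedN N k B j) :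
    mergedEmb N k B j i = cast (mergedN_eq_of_ne N k B h) i := dif_neg h

theorem mergedEmb_k (i : mergedN N k B k) :
    mergedEmb N k B k i = (cast (mergedN_eq_of_eq N k B rfl) i).val := by
  unfold mergedEmb
  rw [dif_pos rfl]
  exact cast_eq _ _

theorem sum_mergedEmb_ne {j : ℕ} (h : j ≠ k) (g : N j → ℝ) :
    ∑ i : mergedN N k B j, g (mergedEmb N k B j i) = ∑ i : N j, g i := by
  apply Fintype.sum_equiv (Equiv.cast (mergedN_eq_of_ne N k B h))
  intro i
  rw [mergedEmb_ne N k B h]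
  rfl

theorem sum_mergedEmb_k (g : N k → ℝ) :
    ∑ i : mergedN N k B k, g (mergedEmb N k B k i) =
      ∑ i : {i : N k // i ∉ B}, g i.val := by
  apply Fintype.sum_equiv (Equiv.cast (mergedN_eq_of_eq N k B rfl))
  intro i
  rw [mergedEmb_k]
  rfl

end Aux

/-- **Soundness of abstraction-based verification of a DNN via one neuron-merging step.**
Let `f` be a DNN with `L` layers, `k ∈ {1,…,L-1}` a hidden layer (its data is indexed by
`k - 1`, and layer `k+1`'s data by `k`), `B` a bucket of neurons of layer `k`, and
`I = [l, u]` a box containing `h_k(x)_{(B)}` for every `x ∈ P`.  Let `f̂'` be the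
abstract network obtained from the trivial abstraction of `f` by removing the neurons of
`B` and compensating with the interval bias `W_{k+1(·,B)}·I`.  Then `f(x) ∈ f̂'(x)` for
every `x ∈ P`; consequently, if `f̂'(x) ∩ Q = ∅` for all `x ∈ P`, then `f(x) ∉ Q` for
all `x ∈ P`. -/
theorem dnn_merged_abstraction_sound (N : ℕ → Type) [∀ j, Fintype (N j)]
    (L k : ℕ) (hk1 : 1 ≤ k) (hkL : k + 1 ≤ L)
    (W : ∀ j, Matrix (N (j + 1)) (N j) ℝ) (b : ∀ j, N (j + 1) → ℝ)
    (φ : ℕ → ℝ → ℝ)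
    (P : Set (N 0 → ℝ)) (B : Set (N k)) [DecidablePred (· ∈ B)]
    (l u : {i : N k // i ∈ B} → ℝ)
    (Q : Set (mergedN N k B L → ℝ))
    (hbox : ∀ x ∈ P,
      (fun i : {i : N k // i ∈ B} => dnnLayer N W b φ x k i.val) ∈ Set.Icc l u) :
    (∀ x ∈ P, dnnLayer N W b φ x L ∘ mergedEmb N k B L ∈
        absLayer (mergedN N k B) (mergedW N k B W) (mergedb N k B b)
          (mergedE0 N k B W l u) φ (x ∘ mergedEmb N k B 0) L) ∧
      ((∀ x ∈ P, absLayer (mergedN N k B) (mergedW N k B W) (mergedb N k B b)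
          (mergedE0 N k B W l u) φ (x ∘ mergedEmb N k B 0) L ∩ Q = ∅) →
        ∀ x ∈ P, dnnLayer N W b φ x L ∘ mergedEmb N k B L ∉ Q) := by
  classical
  have main : ∀ x ∈ P, ∀ j, dnnLayer N W b φ x j ∘ mergedEmb N k B j ∈
      absLayer (mergedN N k B) (mergedW N k B W) (mergedb N k B b)
        (mergedE0 N k B W l u) φ (x ∘ mergedEmb N k B 0) j := by
    intro x hx j
    induction j with
    | zero => rfl
    | succ j ih =>
      by_cases hj : j = k
      · subst hj
        refine ⟨_, ih, fun i₂ => ∑ i : {i : N j // i ∈ B},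
            W j (mergedEmb N j B (j + 1) i₂) i.val * dnnLayer N W b φ x j i.val,
            ?_, ?_⟩
        · unfold mergedE0
          rw [dif_pos rfl]
          exact ⟨fun i => dnnLayer N W b φ x j i.val, hbox x hx, rfl⟩
        · funext i₂
          show φ j _ = φ j _
          congr 1
          simp only [Pi.add_apply, Function.comp_apply, Matrix.mulVec, dotProduct,
            mergedW, mergedb]
          have h1 := sum_mergedEmb_k N j B
            (fun i => W j (mergedEmb N j B (j + 1) i₂) i * dnnLayer N W b φ x j i)
          have h2 := Fintype.sum_subtype_add_sum_subtype (· ∈ B)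
            (fun i => W j (mergedEmb N j B (j + 1) i₂) i * dnnLayer N W b φ x j i)
          rw [h1]
          rw [← h2]
          ring
      · refine ⟨_, ih, 0, ?_, ?_⟩
        · unfold mergedE0
          rw [dif_neg hj]
          rfl
        · funext i₂
          show φ j _ = φ j _
          congr 1
          simp only [Pi.add_apply, Function.comp_apply, Pi.zero_apply, add_zero,
            Matrix.mulVec, dotProduct, mergedW, mergedb]
          have h1 := sum_mergedEmb_ne N k B hj
            (fun i => W j (mergedEmb N k B (j + 1) i₂) i * dnnLayer N W b φ x j i)
          rw [h1]
  refine ⟨fun x hx => main x hx L, fun hQ x hx hmem => ?_⟩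
  exact Set.eq_empty_iff_forall_notMem.mp (hQ x hx) _ ⟨main x hx L, hmem⟩
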